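/- Let g be a finite-dimensional real Lie algebra and λ : g × g → ℝ an alternating bilinear form. Define the affine bracket on smooth functions on g* by {f,g}_λ(ξ) := ξ([d_ξ f, d_ξ g]) + λ(d_ξ f, d_ξ g). Then {·,·}_λ satisfies the Jacobi identity {f,{g,h}_λ}_λ + {h,{f,g}_λ}_λ + {g,{h,f}_λ}_λ = 0 for all smooth f, g, h : g* → ℝ if and only if λ is a 2-cocycle on g, i.e. λ(u,[v,w]) + λ(w,[u,v]) + λ(v,[w,u]) = 0 for all u, v, w ∈ g. -/

import Mathlib

/-- The affine bracket on functions on the dual `g* = g →L[ℝ] ℝ` of a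
finite-dimensional real Lie algebra `g` (with Lie bracket `brkt`), modified by an
alternating bilinear form `lam` on `g`:
`{f,g}_λ(ξ) = ξ ⁅d_ξ f, d_ξ g⁆ + λ(d_ξ f, d_ξ g)`. -/
noncomputable def affineBracket {L : Type*} [NormedAddCommGroup L] [NormedSpace ℝ L]
    (brkt : L →ₗ[ℝ] L →ₗ[ℝ] L) (lam : L →ₗ[ℝ] L →ₗ[ℝ] ℝ)
    (d : ((L →L[ℝ] ℝ) → ℝ) → (L →L[ℝ] ℝ) → L)
    (f g : (L →L[ℝ] ℝ) → ℝ) : (L →L[ℝ] ℝ) → ℝ :=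
  fun ξ => ξ (brkt (d f ξ) (d g ξ)) + lam (d f ξ) (d g ξ)

/-!
Write `Π_ξ u v = ξ ⁅u, v⁆ + λ u v`, so that `{f, g}_λ ξ = Π_ξ (d_ξ f) (d_ξ g)`. Then
`{f, {g, h}_λ}_λ ξ` is the derivative of `{g, h}_λ` at `ξ` in the direction `Π_ξ (d_ξ f)`: it is
`Π_ξ (d_ξ f) ⁅d_ξ g, d_ξ h⁆` plus two terms involving the Hessians of `g` and `h`. Since Hessians
are symmetric and `Π_ξ` is antisymmetric, the Hessian terms cancel in the cyclic sum, so the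
Jacobiator at `ξ` is `ξ (Jac (d_ξ f, d_ξ g, d_ξ h)) + (δλ) (d_ξ f, d_ξ g, d_ξ h)`. The Jacobi
identity of the Lie bracket kills the first term; conversely, linear functions evaluated at
`ξ = 0` recover `δλ` on arbitrary arguments.
-/

open NormedSpace

section DoubleDual

variable (E : Type*) [NormedAddCommGroup E] [NormedSpace ℝ E] [FiniteDimensional ℝ E]

theorem finrank_strongDual : Module.finrank ℝ (E →L[ℝ] ℝ) = Module.finrank ℝ E := by
  rw [← LinearMap.toContinuousLinearMap.finrank_eq, Subspace.dual_finrank_eq]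

theorem bijective_inclusionInDoubleDual : Function.Bijective (inclusionInDoubleDual ℝ E) := by
  have hinj : Function.Injective (inclusionInDoubleDual ℝ E) := fun x y hxy =>
    (SeparatingDual.eq_iff_forall_dual_eq (R := ℝ)).2 fun φ => by
      simpa using DFunLike.congr_fun hxy φ
  have hrank : Module.finrank ℝ E = Module.finrank ℝ ((E →L[ℝ] ℝ) →L[ℝ] ℝ) := by
    rw [finrank_strongDual, finrank_strongDual]
  exact ⟨hinj, (LinearMap.injective_iff_surjective_of_finrank_eq_finrank hrank
    (f := (inclusionInDoubleDual ℝ E : E →ₗ[ℝ] ((E →L[ℝ] ℝ) →L[ℝ] ℝ)))).1 hinj⟩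

noncomputable def doubleDualEquiv : E ≃L[ℝ] ((E →L[ℝ] ℝ) →L[ℝ] ℝ) :=
  (LinearEquiv.ofBijective _ (bijective_inclusionInDoubleDual E)).toContinuousLinearEquiv

variable {E}

@[simp]
theorem doubleDualEquiv_apply (x : E) (φ : E →L[ℝ] ℝ) : doubleDualEquiv E x φ = φ x := by
  simp [doubleDualEquiv]

theorem apply_doubleDualEquiv_symm (Φ : (E →L[ℝ] ℝ) →L[ℝ] ℝ) (φ : E →L[ℝ] ℝ) :
    φ ((doubleDualEquiv E).symm Φ) = Φ φ := by
  conv_rhs => rw [← (doubleDualEquiv E).apply_symm_apply Φ]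
  rw [doubleDualEquiv_apply]

end DoubleDual

section DualGradient

variable {E : Type*} [NormedAddCommGroup E] [NormedSpace ℝ E] [FiniteDimensional ℝ E]
  {f : (E →L[ℝ] ℝ) → ℝ} {ξ : E →L[ℝ] ℝ}

variable (f ξ) in
noncomputable def dualGrad : E :=
  (doubleDualEquiv E).symm (fderiv ℝ f ξ)

variable (f ξ) in
noncomputable def dualHess : (E →L[ℝ] ℝ) →L[ℝ] E :=
  ((doubleDualEquiv E).symm : ((E →L[ℝ] ℝ) →L[ℝ] ℝ) →L[ℝ] E).comp (fderiv ℝ (fderiv ℝ f) ξ)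

theorem apply_dualGrad (α : E →L[ℝ] ℝ) : α (dualGrad f ξ) = fderiv ℝ f ξ α :=
  apply_doubleDualEquiv_symm _ _

theorem apply_dualHess (α β : E →L[ℝ] ℝ) :
    β (dualHess f ξ α) = fderiv ℝ (fderiv ℝ f) ξ α β :=
  apply_doubleDualEquiv_symm _ _

theorem eq_dualGrad_of_apply_eq_fderiv {d : ((E →L[ℝ] ℝ) → ℝ) → (E →L[ℝ] ℝ) → E}
    (hd : ∀ f (ξ α : E →L[ℝ] ℝ), α (d f ξ) = fderiv ℝ f ξ α) : d = dualGrad := by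
  funext f ξ
  exact (SeparatingDual.eq_iff_forall_dual_eq (R := ℝ)).2 fun α => by rw [hd, apply_dualGrad]

@[simp]
theorem dualGrad_eval (x : E) : dualGrad (fun η : E →L[ℝ] ℝ => η x) ξ = x := by
  have hx : HasFDerivAt (fun η : E →L[ℝ] ℝ => η x) (ContinuousLinearMap.apply ℝ ℝ x) ξ :=
    (ContinuousLinearMap.apply ℝ ℝ x).hasFDerivAt
  rw [dualGrad, ContinuousLinearEquiv.symm_apply_eq, hx.fderiv]
  ext φ
  simp

theorem hasFDerivAt_dualGrad (hf : ContDiffAt ℝ 2 f ξ) :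
    HasFDerivAt (dualGrad f) (dualHess f ξ) ξ :=
  show HasFDerivAt ((doubleDualEquiv E).symm ∘ fderiv ℝ f) _ ξ from
  (doubleDualEquiv E).symm.hasFDerivAt.comp ξ
    ((hf.fderiv_right (m := 1) le_rfl).differentiableAt one_ne_zero).hasFDerivAt

theorem dualHess_comm (hf : ContDiffAt ℝ 2 f ξ) (α β : E →L[ℝ] ℝ) :
    β (dualHess f ξ α) = α (dualHess f ξ β) := by
  rw [apply_dualHess, apply_dualHess]
  exact hf.isSymmSndFDerivAt (by simp) α β

end DualGradient

section AffineBracket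

variable {L : Type*} [NormedAddCommGroup L] [NormedSpace ℝ L] [FiniteDimensional ℝ L]
  (brkt : L →ₗ[ℝ] L →ₗ[ℝ] L) (lam : L →ₗ[ℝ] L →ₗ[ℝ] ℝ)

noncomputable def affinePoisson (ξ : L →L[ℝ] ℝ) : L →L[ℝ] L →L[ℝ] ℝ :=
  (brkt.compr₂ (ξ : L →ₗ[ℝ] ℝ) + lam).toContinuousBilinearMap

@[simp]
theorem affinePoisson_apply (ξ : L →L[ℝ] ℝ) (u v : L) :
    affinePoisson brkt lam ξ u v = ξ (brkt u v) + lam u v :=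
  rfl

theorem affineBracket_eq_affinePoisson (d : ((L →L[ℝ] ℝ) → ℝ) → (L →L[ℝ] ℝ) → L)
    (f g : (L →L[ℝ] ℝ) → ℝ) (ξ : L →L[ℝ] ℝ) :
    affineBracket brkt lam d f g ξ = affinePoisson brkt lam ξ (d f ξ) (d g ξ) :=
  rfl

theorem affinePoisson_swap (hbrkt : ∀ u, brkt u u = 0) (hlam : ∀ u, lam u u = 0)
    (ξ : L →L[ℝ] ℝ) (u v : L) :
    affinePoisson brkt lam ξ u v = -affinePoisson brkt lam ξ v u := by
  have hbrkt_add := hbrkt (u + v)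
  have hlam_add := hlam (u + v)
  simp only [map_add, LinearMap.add_apply, hbrkt, hlam, zero_add, add_zero] at hbrkt_add hlam_add
  have hξ : ξ (brkt u v) + ξ (brkt v u) = 0 := by
    rw [← map_add, add_comm, hbrkt_add, map_zero]
  simp only [affinePoisson_apply]
  linarith

variable {f g h : (L →L[ℝ] ℝ) → ℝ} {ξ : L →L[ℝ] ℝ}

theorem fderiv_affineBracket_apply (hg : ContDiffAt ℝ 2 g ξ) (hh : ContDiffAt ℝ 2 h ξ)
    (α : L →L[ℝ] ℝ) :
    fderiv ℝ (affineBracket brkt lam dualGrad g h) ξ α =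
      α (brkt (dualGrad g ξ) (dualGrad h ξ))
        + affinePoisson brkt lam ξ (dualHess g ξ α) (dualGrad h ξ)
        + affinePoisson brkt lam ξ (dualGrad g ξ) (dualHess h ξ α) := by
  have hG := hasFDerivAt_dualGrad hg
  have hH := hasFDerivAt_dualGrad hh
  have hB := (hasFDerivAt_id ξ).clm_apply
    (brkt.toContinuousBilinearMap.hasFDerivAt_of_bilinear hG hH)
  have hΛ := lam.toContinuousBilinearMap.hasFDerivAt_of_bilinear hG hH
  have hbracket : HasFDerivAt (affineBracket brkt lam dualGrad g h) _ ξ := hB.add hΛ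
  rw [hbracket.fderiv]
  simp only [id_eq, ContinuousLinearMap.precompR_apply, ContinuousLinearMap.compL_apply,
    ContinuousLinearMap.comp_add, LinearMap.toContinuousBilinearMap_apply, add_apply,
    ContinuousLinearMap.comp_apply, ContinuousLinearMap.precompL_apply,
    ContinuousLinearMap.flip_apply, ContinuousLinearMap.id_apply, affinePoisson_apply]
  ring

theorem affineBracket_affineBracket (hg : ContDiffAt ℝ 2 g ξ) (hh : ContDiffAt ℝ 2 h ξ) :
    affineBracket brkt lam dualGrad f (affineBracket brkt lam dualGrad g h) ξ =
      affinePoisson brkt lam ξ (dualGrad f ξ) (brkt (dualGrad g ξ) (dualGrad h ξ))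
        + affinePoisson brkt lam ξ
            (dualHess g ξ (affinePoisson brkt lam ξ (dualGrad f ξ))) (dualGrad h ξ)
        + affinePoisson brkt lam ξ
            (dualGrad g ξ) (dualHess h ξ (affinePoisson brkt lam ξ (dualGrad f ξ))) := by
  rw [affineBracket_eq_affinePoisson, apply_dualGrad, fderiv_affineBracket_apply brkt lam hg hh]

theorem affinePoisson_dualHess_skew (hbrkt : ∀ u, brkt u u = 0)
    (hlam : ∀ u, lam u u = 0) (hg : ContDiffAt ℝ 2 g ξ) (u v : L) :
    affinePoisson brkt lam ξ (dualHess g ξ (affinePoisson brkt lam ξ u)) v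
      + affinePoisson brkt lam ξ u (dualHess g ξ (affinePoisson brkt lam ξ v)) = 0 := by
  rw [affinePoisson_swap brkt lam hbrkt hlam, dualHess_comm hg, neg_add_cancel]

theorem affineBracket_jacobiator (hbrkt : ∀ u, brkt u u = 0) (hlam : ∀ u, lam u u = 0)
    (hf : ContDiffAt ℝ 2 f ξ) (hg : ContDiffAt ℝ 2 g ξ) (hh : ContDiffAt ℝ 2 h ξ) :
    affineBracket brkt lam dualGrad f (affineBracket brkt lam dualGrad g h) ξ
        + affineBracket brkt lam dualGrad h (affineBracket brkt lam dualGrad f g) ξ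
        + affineBracket brkt lam dualGrad g (affineBracket brkt lam dualGrad h f) ξ =
      ξ (brkt (dualGrad f ξ) (brkt (dualGrad g ξ) (dualGrad h ξ))
          + brkt (dualGrad h ξ) (brkt (dualGrad f ξ) (dualGrad g ξ))
          + brkt (dualGrad g ξ) (brkt (dualGrad h ξ) (dualGrad f ξ)))
        + (lam (dualGrad f ξ) (brkt (dualGrad g ξ) (dualGrad h ξ))
          + lam (dualGrad h ξ) (brkt (dualGrad f ξ) (dualGrad g ξ))
          + lam (dualGrad g ξ) (brkt (dualGrad h ξ) (dualGrad f ξ))) := by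
  have hess_f := affinePoisson_dualHess_skew brkt lam hbrkt hlam hf
    (dualGrad h ξ) (dualGrad g ξ)
  have hess_g := affinePoisson_dualHess_skew brkt lam hbrkt hlam hg
    (dualGrad f ξ) (dualGrad h ξ)
  have hess_h := affinePoisson_dualHess_skew brkt lam hbrkt hlam hh
    (dualGrad g ξ) (dualGrad f ξ)
  rw [affineBracket_affineBracket brkt lam hg hh, affineBracket_affineBracket brkt lam hf hg,
    affineBracket_affineBracket brkt lam hh hf]
  simp only [affinePoisson_apply, map_add] at hess_f hess_g hess_h ⊢
  linear_combination hess_f + hess_g + hess_h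

end AffineBracket

/-- The affine bracket `{·,·}_λ` on the dual of a finite-dimensional real Lie algebra
satisfies the Jacobi identity (on all smooth functions) if and only if `λ` is a
2-cocycle on the Lie algebra. -/
theorem affineBracket_jacobi_iff_cocycle {L : Type*} [NormedAddCommGroup L]
    [NormedSpace ℝ L] [FiniteDimensional ℝ L]
    -- the Lie algebra structure on `L`:
    (brkt : L →ₗ[ℝ] L →ₗ[ℝ] L)
    (hbrkt_alt : ∀ u : L, brkt u u = 0)
    (hbrkt_jacobi : ∀ u v w : L,
      brkt u (brkt v w) + brkt w (brkt u v) + brkt v (brkt w u) = 0)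
    -- an alternating bilinear form on `L`:
    (lam : L →ₗ[ℝ] L →ₗ[ℝ] ℝ)
    (hlam : ∀ u : L, lam u u = 0)
    -- the identification of the Fréchet derivative at `ξ ∈ g*` with an element of `g`,
    -- via the canonical isomorphism `g ≅ (g*)*`:
    (d : ((L →L[ℝ] ℝ) → ℝ) → (L →L[ℝ] ℝ) → L)
    (hd : ∀ (f : (L →L[ℝ] ℝ) → ℝ) (ξ α : L →L[ℝ] ℝ), α (d f ξ) = fderiv ℝ f ξ α) :
    (∀ f g h : (L →L[ℝ] ℝ) → ℝ,
        ContDiff ℝ (⊤ : ℕ∞) f → ContDiff ℝ (⊤ : ℕ∞) g → ContDiff ℝ (⊤ : ℕ∞) h →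
        ∀ ξ : L →L[ℝ] ℝ,
          affineBracket brkt lam d f (affineBracket brkt lam d g h) ξ
            + affineBracket brkt lam d h (affineBracket brkt lam d f g) ξ
            + affineBracket brkt lam d g (affineBracket brkt lam d h f) ξ = 0)
      ↔ (∀ u v w : L, lam u (brkt v w) + lam w (brkt u v) + lam v (brkt w u) = 0) := by
  obtain rfl := eq_dualGrad_of_apply_eq_fderiv hd
  constructor
  · intro hjacobi u v w
    have eval_smooth : ∀ (x : L) {n : WithTop ℕ∞}, ContDiff ℝ n (fun η : L →L[ℝ] ℝ => η x) :=
      fun x _ => (ContinuousLinearMap.apply ℝ ℝ x).contDiff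
    have h := hjacobi _ _ _ (eval_smooth u) (eval_smooth v) (eval_smooth w) 0
    rwa [affineBracket_jacobiator brkt lam hbrkt_alt hlam (eval_smooth u).contDiffAt
      (eval_smooth v).contDiffAt (eval_smooth w).contDiffAt, dualGrad_eval, dualGrad_eval,
      dualGrad_eval, zero_apply, zero_add] at h
  · intro hcocycle f g h hf hg hh ξ
    have two_le : (2 : WithTop ℕ∞) ≤ ((⊤ : ℕ∞) : WithTop ℕ∞) := WithTop.coe_le_coe.2 le_top
    rw [affineBracket_jacobiator brkt lam hbrkt_alt hlam (hf.of_le two_le).contDiffAt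
      (hg.of_le two_le).contDiffAt (hh.of_le two_le).contDiffAt, hbrkt_jacobi, map_zero,
      hcocycle, add_zero]
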